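/- Let (W,S) be a Coxeter system with S finite. Then every finite subgroup G of W is conjugate to a subgroup of a finite standard parabolic subgroup: there exist w ∈ W and T ⊆ S such that W_T is finite and wGw⁻¹ ⊆ W_T. -/

import Mathlib

/-!
Let `ρ` be Tits' geometric representation of `W` on `ℝ^S`, for the cosine form
`B(α_s, α_t) = -cos (π / m_st)`. Every root `ρ(w) α_s` has all coordinates of one sign
(Tits' theorem, reduced to a dihedral computation where the coordinates are the Chebyshev
values `sin (kπ/m) / sin (π/m)`), and `w` turns exactly `ℓ(w)` positive roots negative.

Averaging the coordinate sum over the finite group `G` gives a `G`-invariant functional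
`Y` which, composed with any `ρ(w)`, is positive on all but finitely many positive roots.
Choosing `w` so that `Y ∘ ρ(w)` is negative on as few positive roots as possible puts
`φ = Y ∘ ρ(w)` in the closed fundamental chamber: `φ(α_s) ≥ 0` for all `s`. The stabiliser
of `φ` is then the standard parabolic subgroup `W_T`, `T = {s | φ(α_s) = 0}`; it contains
`w⁻¹ G w`, and it is finite because each of its elements makes negative only positive roots
on which `φ ≤ 0`.
-/

open Polynomial.Chebyshev

namespace CoxeterMatrix

variable {B : Type*} (M : CoxeterMatrix B)

/-- `cos (π / m)`; for `m = 0`, which stands for `m = ∞`, Lean's `π / 0 = 0` gives the intended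
value `cos 0 = 1`. -/
noncomputable def cosAngle (i j : B) : ℝ := Real.cos (Real.pi / M i j)

lemma cosAngle_comm (i j : B) : M.cosAngle i j = M.cosAngle j i := by
  rw [cosAngle, cosAngle, M.symmetric]

lemma cosAngle_self (i : B) : M.cosAngle i i = -1 := by
  simp [cosAngle]

lemma cosAngle_of_eq_zero {i j : B} (h : M i j = 0) : M.cosAngle i j = 1 := by
  simp [cosAngle, h]

lemma sin_pi_div_pos {i j : B} (hij : i ≠ j) (h : M i j ≠ 0) :
    0 < Real.sin (Real.pi / M i j) := by
  have : (2 : ℝ) ≤ M i j := by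
    have := M.off_diagonal i j hij
    exact_mod_cast (show 2 ≤ M i j by omega)
  apply Real.sin_pos_of_pos_of_lt_pi (by positivity)
  rw [div_lt_iff₀ (by positivity)]
  nlinarith [Real.pi_pos]

lemma chebyshevS_eval_cosAngle_nonneg {i j : B} (hij : i ≠ j) {k : ℤ} (hk₀ : -1 ≤ k)
    (hk : M i j = 0 ∨ k < M i j) : 0 ≤ (S ℝ k).eval (2 * M.cosAngle i j) := by
  by_cases h : M i j = 0
  · rw [M.cosAngle_of_eq_zero h, mul_one, S_eval_two]
    exact_mod_cast (by omega : 0 ≤ k + 1)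
  have hk : k + 1 ≤ M i j := by omega
  apply nonneg_of_mul_nonneg_left _ (M.sin_pi_div_pos hij h)
  rw [cosAngle, S_two_mul_real_cos]
  apply Real.sin_nonneg_of_nonneg_of_le_pi
  · have : (0 : ℝ) ≤ k + 1 := by exact_mod_cast (by omega : 0 ≤ k + 1)
    positivity
  · have : (k + 1 : ℝ) ≤ M i j := by exact_mod_cast hk
    rw [← mul_div_assoc, div_le_iff₀ (by positivity)]
    nlinarith [Real.pi_pos]

lemma chebyshevS_two_mul_eval_cosAngle {i j : B} (hij : i ≠ j) (h : M i j ≠ 0) :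
    (S ℝ (2 * M i j)).eval (2 * M.cosAngle i j) = 1 ∧
      (S ℝ (2 * M i j - 1)).eval (2 * M.cosAngle i j) = 0 := by
  have hsin := M.sin_pi_div_pos hij h
  have hm : (M i j : ℝ) ≠ 0 := by exact_mod_cast h
  constructor
  · apply mul_right_cancel₀ hsin.ne'
    rw [cosAngle, S_two_mul_real_cos, one_mul]
    convert Real.sin_add_two_pi (Real.pi / M i j) using 2
    push_cast
    field_simp
    ring
  · apply mul_right_cancel₀ hsin.ne'
    rw [cosAngle, S_two_mul_real_cos, zero_mul]
    convert Real.sin_two_pi using 2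
    push_cast
    field_simp
    ring

variable [Fintype B] [DecidableEq B]

noncomputable def bilinForm : LinearMap.BilinForm ℝ (B → ℝ) :=
  Matrix.toLinearMap₂' ℝ (Matrix.of fun i j => -M.cosAngle i j)

noncomputable def simpleRoot (i : B) : B → ℝ := Pi.single i 1

lemma bilinForm_simpleRoot (i j : B) :
    M.bilinForm (simpleRoot i) (simpleRoot j) = -M.cosAngle i j := by
  simp [bilinForm, simpleRoot, Matrix.toLinearMap₂'_apply']

lemma bilinForm_comm (x y : B → ℝ) : M.bilinForm x y = M.bilinForm y x := by
  simp only [bilinForm, Matrix.toLinearMap₂'_apply, Matrix.of_apply, smul_eq_mul]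
  rw [Finset.sum_comm]
  refine Finset.sum_congr rfl fun i _ => Finset.sum_congr rfl fun j _ => ?_
  rw [M.cosAngle_comm]
  ring

lemma bilinForm_simpleRoot_self (i : B) : M.bilinForm (simpleRoot i) (simpleRoot i) = 1 := by
  rw [bilinForm_simpleRoot, cosAngle_self, neg_neg]

lemma two_smul_bilinForm_simpleRoot_self (i : B) :
    (2 • M.bilinForm (simpleRoot i)) (simpleRoot i) = 2 := by
  simp [bilinForm_simpleRoot_self]

noncomputable def simpleReflection (i : B) : (B → ℝ) ≃ₗ[ℝ] (B → ℝ) :=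
  Module.reflection (M.two_smul_bilinForm_simpleRoot_self i)

lemma simpleReflection_apply (i : B) (x : B → ℝ) :
    M.simpleReflection i x = x - (2 * M.bilinForm (simpleRoot i) x) • simpleRoot i := by
  simp [simpleReflection, Module.reflection_apply]

@[simp]
lemma simpleReflection_inv (i : B) : (M.simpleReflection i)⁻¹ = M.simpleReflection i :=
  Module.reflection_inv _

lemma simpleReflection_simpleReflection (i : B) (x : B → ℝ) :
    M.simpleReflection i (M.simpleReflection i x) = x :=
  Module.involutive_reflection _ x

lemma simpleReflection_simpleRoot (i : B) : M.simpleReflection i (simpleRoot i) = -simpleRoot i :=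
  Module.reflection_apply_self _

lemma simpleReflection_apply_of_bilinForm_eq_zero {i : B} {x : B → ℝ}
    (h : M.bilinForm (simpleRoot i) x = 0) : M.simpleReflection i x = x := by
  simp [simpleReflection_apply, h]

lemma simpleReflection_apply_of_ne {i b : B} (h : b ≠ i) (x : B → ℝ) :
    M.simpleReflection i x b = x b := by
  simp [simpleReflection_apply, simpleRoot, h]

lemma bilinForm_simpleReflection (i : B) (x y : B → ℝ) :
    M.bilinForm (M.simpleReflection i x) (M.simpleReflection i y) = M.bilinForm x y := by
  simp only [simpleReflection_apply, map_sub, map_smul, LinearMap.sub_apply, LinearMap.smul_apply,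
    smul_eq_mul, bilinForm_simpleRoot_self, M.bilinForm_comm x (simpleRoot i)]
  ring

lemma simpleReflection_smul_add_smul (i j : B) (c d : ℝ) :
    M.simpleReflection i (c • simpleRoot i + d • simpleRoot j) =
      (2 * M.cosAngle i j * d - c) • simpleRoot i + d • simpleRoot j := by
  simp only [simpleReflection_apply, map_add, map_smul, bilinForm_simpleRoot, cosAngle_self]
  module

lemma simpleReflection_smul_add_smul' (i j : B) (c d : ℝ) :
    M.simpleReflection j (c • simpleRoot i + d • simpleRoot j) =
      c • simpleRoot i + (2 * M.cosAngle i j * c - d) • simpleRoot j := by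
  simp only [simpleReflection_apply, map_add, map_smul, bilinForm_simpleRoot, cosAngle_self,
    M.cosAngle_comm j i]
  module

lemma simpleReflection_mul_pow_apply (i j : B) (p : ℕ) :
    ((M.simpleReflection i * M.simpleReflection j) ^ p) (simpleRoot i) =
      (S ℝ (2 * p)).eval (2 * M.cosAngle i j) • simpleRoot i +
        (S ℝ (2 * p - 1)).eval (2 * M.cosAngle i j) • simpleRoot j := by
  induction p with
  | zero => simp [simpleRoot]
  | succ p ih =>
    rw [pow_succ', LinearEquiv.mul_apply, ih, LinearEquiv.mul_apply,
      simpleReflection_smul_add_smul', simpleReflection_smul_add_smul]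
    set x := 2 * M.cosAngle i j
    have h₁ : (S ℝ (2 * p + 1)).eval x =
        x * (S ℝ (2 * p)).eval x - (S ℝ (2 * p - 1)).eval x := by
      simp [S_add_one]
    have h₂ : (S ℝ (2 * p + 2)).eval x =
        x * (S ℝ (2 * p + 1)).eval x - (S ℝ (2 * p)).eval x := by
      simp [S_add_two]
    rw [show 2 * ((p + 1 : ℕ) : ℤ) = 2 * p + 2 by push_cast; ring,
      show (2 * p + 2 : ℤ) - 1 = 2 * p + 1 by ring, h₂, h₁]

lemma simpleReflection_mul_simpleReflection_mul_pow_apply (i j : B) (p : ℕ) :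
    (M.simpleReflection j * (M.simpleReflection i * M.simpleReflection j) ^ p) (simpleRoot i) =
      (S ℝ (2 * p)).eval (2 * M.cosAngle i j) • simpleRoot i +
        (S ℝ (2 * p + 1)).eval (2 * M.cosAngle i j) • simpleRoot j := by
  rw [LinearEquiv.mul_apply, simpleReflection_mul_pow_apply, simpleReflection_smul_add_smul']
  simp [S_add_one]

lemma exists_bilinForm_sub_eq_zero {i j : B} (hij : i ≠ j) (h : M i j ≠ 0) (x : B → ℝ) :
    ∃ c d : ℝ, M.bilinForm (simpleRoot i) (x - c • simpleRoot i - d • simpleRoot j) = 0 ∧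
      M.bilinForm (simpleRoot j) (x - c • simpleRoot i - d • simpleRoot j) = 0 := by
  set κ := M.cosAngle i j
  set u := M.bilinForm (simpleRoot i) x
  set v := M.bilinForm (simpleRoot j) x
  have hκ : 1 - κ ^ 2 ≠ 0 := by
    have := M.sin_pi_div_pos hij h
    have := Real.sin_sq_add_cos_sq (Real.pi / M i j)
    simp only [κ, cosAngle]
    nlinarith
  refine ⟨(u + κ * v) / (1 - κ ^ 2), (v + κ * u) / (1 - κ ^ 2), ?_, ?_⟩ <;>
  · simp only [map_sub, map_smul, bilinForm_simpleRoot, cosAngle_self, M.cosAngle_comm j i,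
      smul_eq_mul]
    field_simp
    ring

lemma isLiftable_simpleReflection : M.IsLiftable M.simpleReflection := by
  intro i j
  rcases eq_or_ne i j with rfl | hij
  · rw [M.diagonal, pow_one]
    exact LinearEquiv.ext (M.simpleReflection_simpleReflection i)
  by_cases h : M i j = 0
  · rw [h, pow_zero]
  set f := (M.simpleReflection i * M.simpleReflection j) ^ M i j
  obtain ⟨hS, hS'⟩ := M.chebyshevS_two_mul_eval_cosAngle hij h
  have hi : f (simpleRoot i) = simpleRoot i := by
    simp [f, simpleReflection_mul_pow_apply, hS, hS']
  have hj : f (simpleRoot j) = simpleRoot j := by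
    have : f⁻¹ (simpleRoot j) = simpleRoot j := by
      simp [f, ← inv_pow, simpleReflection_mul_pow_apply, M.cosAngle_comm j i, hS, hS']
    conv_lhs => rw [← this]
    exact f.apply_symm_apply _
  -- `B → ℝ` is the plane of `α i, α j` plus its orthogonal, which both reflections fix.
  have horth : ∀ q, M.bilinForm (simpleRoot i) q = 0 → M.bilinForm (simpleRoot j) q = 0 →
      f q = q := fun q hqi hqj => by
    rw [LinearEquiv.coe_pow]
    apply Function.iterate_fixed
    rw [LinearEquiv.mul_apply, simpleReflection_apply_of_bilinForm_eq_zero _ hqj,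
      simpleReflection_apply_of_bilinForm_eq_zero _ hqi]
  ext1 x
  obtain ⟨c, d, hci, hdj⟩ := M.exists_bilinForm_sub_eq_zero hij h x
  have := horth _ hci hdj
  rw [map_sub, map_sub, map_smul, map_smul, hi, hj, sub_left_inj, sub_left_inj] at this
  exact this

end CoxeterMatrix

namespace CoxeterSystem

open CoxeterMatrix

variable {B W : Type*} [Group W] {M : CoxeterMatrix B} (cs : CoxeterSystem M W)

/-- `if Even k then t else i` is the letter that `alternatingWord i t (k + 1)` puts in front of
`alternatingWord i t k`; the proof strips `t, i, t, …` off `w` while they are descents. -/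
lemma exists_alternatingWord_suffix {w v : W} {i t : B} {k : ℕ}
    (hw : w = v * cs.wordProd (alternatingWord i t k)) (hℓ : cs.length w = cs.length v + k) :
    ∃ v k, w = v * cs.wordProd (alternatingWord i t k) ∧ cs.length w = cs.length v + k ∧
      ¬cs.IsRightDescent v (if Even k then t else i) := by
  induction hn : cs.length v using Nat.strong_induction_on generalizing v k with
  | _ n ih =>
  by_cases hv : cs.IsRightDescent v (if Even k then t else i)
  · have hℓv := cs.isRightDescent_iff.mp hv
    refine ih _ (by rw [← hn]; exact hv) (v := v * cs.simple (if Even k then t else i))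
      (k := k + 1) ?_ (by omega) rfl
    rw [alternatingWord_succ', wordProd_cons, ← mul_assoc, simple_mul_simple_cancel_right, hw]
  · exact ⟨v, k, hw, hℓ, hv⟩

lemma lt_of_not_isRightDescent_alternatingWord {i t : B} {k : ℕ}
    (hred : cs.IsReduced (alternatingWord i t k))
    (hi : ¬cs.IsRightDescent (cs.wordProd (alternatingWord i t k)) i) :
    M i t = 0 ∨ k < M i t := by
  by_contra! h
  obtain ⟨h0, hk⟩ := h
  rcases hk.lt_or_eq with hlt | rfl
  · exact cs.not_isReduced_alternatingWord i t h0 hlt hred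
  obtain ⟨k, hk⟩ := Nat.exists_eq_succ_of_ne_zero h0
  apply hi
  have hbraid := cs.wordProd_braidWord_eq i t
  rw [braidWord, braidWord, M.symmetric t i, hk, alternatingWord_succ t i, wordProd_concat]
    at hbraid
  have hlen := hred.eq
  rw [length_alternatingWord, hk] at hlen
  rw [IsRightDescent, hk, hbraid, simple_mul_simple_cancel_right, ← hbraid, hlen]
  exact (cs.length_wordProd_le _).trans_lt (by simp [length_alternatingWord])

lemma exists_mul_alternatingWord_of_isRightDescent {w : W} {i t : B}
    (hi : ¬cs.IsRightDescent w i) (ht : cs.IsRightDescent w t) :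
    ∃ v k, cs.length v < cs.length w ∧ ¬cs.IsRightDescent v i ∧ ¬cs.IsRightDescent v t ∧
      w = v * cs.wordProd (alternatingWord i t k) ∧ (M i t = 0 ∨ k < M i t) := by
  obtain ⟨v, k, hw, hℓ, hv⟩ :=
    cs.exists_alternatingWord_suffix (v := w) (i := i) (t := t) (k := 0)
      (by simp [alternatingWord]) rfl
  obtain ⟨k, rfl⟩ : ∃ k', k = k' + 1 := by
    refine Nat.exists_eq_succ_of_ne_zero fun hk => ?_
    subst hk
    simp only [alternatingWord, wordProd_nil, mul_one] at hw
    simp [← hw, ht] at hv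
  set y := if Even k then t else i
  have hy : ¬cs.IsRightDescent v y := by
    have hw' : w = v * cs.simple y * cs.wordProd (alternatingWord i t k) := by
      rw [hw, alternatingWord_succ', wordProd_cons, mul_assoc]
    have h₁ := cs.length_mul_le (v * cs.simple y) (cs.wordProd (alternatingWord i t k))
    have h₂ := cs.length_wordProd_le (alternatingWord i t k)
    rw [← hw'] at h₁
    rw [length_alternatingWord] at h₂
    rw [IsRightDescent]
    omega
  have hred : cs.IsReduced (alternatingWord i t (k + 1)) := by
    have h₁ := cs.length_mul_le v (cs.wordProd (alternatingWord i t (k + 1)))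
    have h₂ := cs.length_wordProd_le (alternatingWord i t (k + 1))
    rw [← hw] at h₁
    rw [length_alternatingWord] at h₂
    rw [IsReduced, length_alternatingWord]
    omega
  have hvit : ¬cs.IsRightDescent v i ∧ ¬cs.IsRightDescent v t := by
    by_cases hk : Even k <;> simp_all [y, Nat.even_add_one]
  refine ⟨v, k + 1, by omega, hvit.1, hvit.2, hw, ?_⟩
  refine cs.lt_of_not_isRightDescent_alternatingWord hred fun hdesc => hi ?_
  have := cs.length_mul_le v (cs.wordProd (alternatingWord i t (k + 1)) * cs.simple i)
  rw [IsRightDescent, hred.eq, length_alternatingWord] at hdesc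
  rw [hw] at hℓ
  rw [IsRightDescent, hw, mul_assoc]
  omega

theorem rightDescent_induction {P : W → Prop} (one : P 1)
    (mul_simple : ∀ w i, cs.IsRightDescent w i → P (w * cs.simple i) → P w) (w : W) :
    P w := by
  induction hn : cs.length w using Nat.strong_induction_on generalizing w with
  | _ n ih =>
  rcases eq_or_ne w 1 with rfl | hw
  · exact one
  obtain ⟨i, hi⟩ := cs.exists_rightDescent_of_ne_one hw
  exact mul_simple w i hi (ih _ (hn ▸ hi) _ rfl)

lemma finite_setOf_length_le [Finite B] (n : ℕ) : {w : W | cs.length w ≤ n}.Finite :=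
  ((List.finite_length_le B n).image cs.wordProd).subset fun w hw => by
    obtain ⟨ω, hω, rfl⟩ := cs.exists_isReduced w
    exact ⟨ω, hω.eq.symm.trans_le hw, rfl⟩

variable [Fintype B] [DecidableEq B]

noncomputable def geomRep : W →* (B → ℝ) ≃ₗ[ℝ] (B → ℝ) :=
  cs.lift ⟨M.simpleReflection, M.isLiftable_simpleReflection⟩

@[simp]
lemma geomRep_simple (i : B) : cs.geomRep (cs.simple i) = M.simpleReflection i :=
  cs.lift_apply_simple _ i

lemma geomRep_mul_apply (u v : W) (x : B → ℝ) :
    cs.geomRep (u * v) x = cs.geomRep u (cs.geomRep v x) := by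
  rw [map_mul, LinearEquiv.mul_apply]

lemma bilinForm_geomRep (w : W) (x y : B → ℝ) :
    M.bilinForm (cs.geomRep w x) (cs.geomRep w y) = M.bilinForm x y := by
  induction w using cs.simple_induction_left with
  | one => simp
  | mul_simple_left w i ih =>
    rw [geomRep_mul_apply, geomRep_mul_apply, geomRep_simple, bilinForm_simpleReflection, ih]

lemma geomRep_alternatingWord_simpleRoot {i j : B} (hij : i ≠ j) {k : ℕ}
    (hk : M i j = 0 ∨ k < M i j) :
    ∃ c d : ℝ, 0 ≤ c ∧ 0 ≤ d ∧
      cs.geomRep (cs.wordProd (alternatingWord i j k)) (simpleRoot i) =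
        c • simpleRoot i + d • simpleRoot j := by
  have hS (n : ℤ) (h₀ : -1 ≤ n) (hn : n ≤ k) := M.chebyshevS_eval_cosAngle_nonneg hij h₀
    (hk.imp_right fun h => hn.trans_lt (by exact_mod_cast h))
  rw [prod_alternatingWord_eq_mul_pow, map_mul, map_pow, map_mul]
  obtain ⟨p, rfl | rfl⟩ := Nat.even_or_odd' k
  · rw [if_pos (even_two_mul p), map_one, one_mul, geomRep_simple, geomRep_simple,
      Nat.mul_div_cancel_left _ two_pos, simpleReflection_mul_pow_apply]
    exact ⟨_, _, hS _ (by omega) (by push_cast; omega), hS _ (by omega) (by push_cast; omega),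
      rfl⟩
  · rw [if_neg (Nat.not_even_two_mul_add_one p), geomRep_simple, geomRep_simple,
      show (2 * p + 1) / 2 = p by omega,
      simpleReflection_mul_simpleReflection_mul_pow_apply]
    exact ⟨_, _, hS _ (by omega) (by push_cast; omega), hS _ (by omega) (by push_cast; omega),
      rfl⟩

theorem geomRep_simpleRoot_nonneg {w : W} {i : B} (h : ¬cs.IsRightDescent w i) :
    0 ≤ cs.geomRep w (simpleRoot i) := by
  induction hn : cs.length w using Nat.strong_induction_on generalizing w i with
  | _ n ih =>
  rcases eq_or_ne w 1 with rfl | hw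
  · simp [simpleRoot, Pi.single_nonneg]
  obtain ⟨t, ht⟩ := cs.exists_rightDescent_of_ne_one hw
  have hit : i ≠ t := by rintro rfl; exact h ht
  obtain ⟨v, k, hlt, hvi, hvt, rfl, hk⟩ := cs.exists_mul_alternatingWord_of_isRightDescent h ht
  obtain ⟨c, d, hc, hd, heq⟩ := cs.geomRep_alternatingWord_simpleRoot hit hk
  rw [geomRep_mul_apply, heq, map_add, map_smul, map_smul]
  exact add_nonneg (smul_nonneg hc (ih _ (hn ▸ hlt) hvi rfl))
    (smul_nonneg hd (ih _ (hn ▸ hlt) hvt rfl))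

theorem geomRep_simpleRoot_nonpos {w : W} {i : B} (h : cs.IsRightDescent w i) :
    cs.geomRep w (simpleRoot i) ≤ 0 := by
  have := cs.geomRep_simpleRoot_nonneg (cs.isRightDescent_iff_not_isRightDescent_mul.mp h)
  rwa [geomRep_mul_apply, geomRep_simple, simpleReflection_simpleRoot, map_neg,
    neg_nonneg] at this

def roots : Set (B → ℝ) := {γ | ∃ w i, cs.geomRep w (simpleRoot i) = γ}

def posRoots : Set (B → ℝ) := {γ ∈ cs.roots | 0 ≤ γ}

variable {cs}

lemma simpleRoot_mem_posRoots (i : B) : simpleRoot i ∈ cs.posRoots :=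
  ⟨⟨1, i, by simp⟩, by simp [simpleRoot, Pi.single_nonneg]⟩

lemma geomRep_mem_roots (w : W) {γ : B → ℝ} (hγ : γ ∈ cs.roots) :
    cs.geomRep w γ ∈ cs.roots := by
  obtain ⟨v, i, rfl⟩ := hγ
  exact ⟨w * v, i, geomRep_mul_apply ..⟩

lemma simpleReflection_mem_roots (i : B) {γ : B → ℝ} (hγ : γ ∈ cs.roots) :
    M.simpleReflection i γ ∈ cs.roots := by
  simpa using geomRep_mem_roots (cs.simple i) hγ

lemma nonneg_or_nonpos_of_mem_roots {γ : B → ℝ} (hγ : γ ∈ cs.roots) :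
    0 ≤ γ ∨ γ ≤ 0 := by
  obtain ⟨w, i, rfl⟩ := hγ
  by_cases h : cs.IsRightDescent w i
  · exact .inr (cs.geomRep_simpleRoot_nonpos h)
  · exact .inl (cs.geomRep_simpleRoot_nonneg h)

lemma bilinForm_self_of_mem_roots {γ : B → ℝ} (hγ : γ ∈ cs.roots) :
    M.bilinForm γ γ = 1 := by
  obtain ⟨w, i, rfl⟩ := hγ
  rw [bilinForm_geomRep, bilinForm_simpleRoot_self]

lemma ne_zero_of_mem_roots {γ : B → ℝ} (hγ : γ ∈ cs.roots) : γ ≠ 0 := by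
  rintro rfl
  simpa using bilinForm_self_of_mem_roots hγ

lemma not_nonpos_of_mem_posRoots {γ : B → ℝ} (hγ : γ ∈ cs.posRoots) : ¬γ ≤ 0 :=
  fun h => ne_zero_of_mem_roots hγ.1 (le_antisymm h hγ.2)

lemma eq_simpleRoot_of_simpleReflection_nonpos {γ : B → ℝ} (hγ : γ ∈ cs.posRoots) {i : B}
    (h : M.simpleReflection i γ ≤ 0) : γ = simpleRoot i := by
  have hγi : γ = γ i • simpleRoot i := by
    funext b
    by_cases hb : b = i
    · simp [hb, simpleRoot]
    · have := h b
      rw [simpleReflection_apply_of_ne _ hb] at this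
      simp [simpleRoot, hb, le_antisymm this (hγ.2 b)]
  have hform := bilinForm_self_of_mem_roots hγ.1
  rw [hγi] at hform
  simp only [map_smul, LinearMap.smul_apply, smul_eq_mul, bilinForm_simpleRoot_self, mul_one,
    mul_self_eq_one_iff] at hform
  rw [hγi, hform.resolve_right fun h1 => by
    have := hγ.2 i
    norm_num [h1] at this, one_smul]

lemma simpleReflection_mem_posRoots {γ : B → ℝ} (hγ : γ ∈ cs.posRoots) {i : B}
    (hne : γ ≠ simpleRoot i) : M.simpleReflection i γ ∈ cs.posRoots :=
  ⟨simpleReflection_mem_roots i hγ.1, ((nonneg_or_nonpos_of_mem_roots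
    (simpleReflection_mem_roots i hγ.1)).resolve_right
      fun h => hne (eq_simpleRoot_of_simpleReflection_nonpos hγ h))⟩

lemma simpleReflection_simpleRoot_notMem_posRoots (i : B) :
    M.simpleReflection i (simpleRoot i) ∉ cs.posRoots := by
  rw [simpleReflection_simpleRoot]
  exact fun h => not_nonpos_of_mem_posRoots h
    (by simpa using (simpleRoot_mem_posRoots (cs := cs) i).2)

variable (cs)

def inversionRoots (w : W) : Set (B → ℝ) := {γ ∈ cs.posRoots | cs.geomRep w γ ≤ 0}

lemma inversionRoots_of_isRightDescent {w : W} {i : B} (h : cs.IsRightDescent w i) :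
    cs.inversionRoots w =
      insert (simpleRoot i) (M.simpleReflection i '' cs.inversionRoots (w * cs.simple i)) := by
  have hσ (γ : B → ℝ) :
      cs.geomRep (w * cs.simple i) γ = cs.geomRep w (M.simpleReflection i γ) := by
    rw [geomRep_mul_apply, geomRep_simple]
  ext γ
  constructor
  · rintro ⟨hγ, hwγ⟩
    rcases eq_or_ne γ (simpleRoot i) with rfl | hne
    · exact Set.mem_insert _ _
    refine Set.mem_insert_of_mem _ ⟨_, ⟨simpleReflection_mem_posRoots hγ hne, ?_⟩, ?_⟩
    · rwa [hσ, simpleReflection_simpleReflection _ i γ]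
    · exact simpleReflection_simpleReflection _ i γ
  · rintro (rfl | ⟨δ, ⟨hδ, hwδ⟩, rfl⟩)
    · exact ⟨simpleRoot_mem_posRoots i, cs.geomRep_simpleRoot_nonpos h⟩
    have hne : δ ≠ simpleRoot i := by
      rintro rfl
      exact not_nonpos_of_mem_posRoots ⟨geomRep_mem_roots _ (simpleRoot_mem_posRoots i).1,
        cs.geomRep_simpleRoot_nonneg (cs.isRightDescent_iff_not_isRightDescent_mul.mp h)⟩ hwδ
    exact ⟨simpleReflection_mem_posRoots hδ hne, by rwa [← hσ]⟩

@[simp]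
lemma inversionRoots_one : cs.inversionRoots 1 = ∅ :=
  Set.eq_empty_of_forall_notMem fun _ hγ => not_nonpos_of_mem_posRoots hγ.1 (by simpa using hγ.2)

lemma finite_inversionRoots (w : W) : (cs.inversionRoots w).Finite := by
  induction w using cs.rightDescent_induction with
  | one => simp
  | mul_simple w i hi ih => rw [cs.inversionRoots_of_isRightDescent hi]; exact (ih.image _).insert _

lemma ncard_inversionRoots (w : W) : (cs.inversionRoots w).ncard = cs.length w := by
  induction w using cs.rightDescent_induction with
  | one => simp
  | mul_simple w i hi ih =>
    have hi' : simpleRoot i ∉ M.simpleReflection i '' cs.inversionRoots (w * cs.simple i) := by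
      rintro ⟨δ, ⟨hδ, -⟩, hδi⟩
      apply simpleReflection_simpleRoot_notMem_posRoots (cs := cs) i
      rwa [← hδi, simpleReflection_simpleReflection]
    rw [cs.inversionRoots_of_isRightDescent hi,
      Set.ncard_insert_of_notMem hi' ((cs.finite_inversionRoots _).image _),
      Set.ncard_image_of_injective _ (M.simpleReflection i).injective, ih,
      cs.isRightDescent_iff.mp hi]

section Functional

variable (φ : Module.Dual ℝ (B → ℝ))

lemma apply_nonpos_of_nonpos (hφ : ∀ i, 0 ≤ φ (simpleRoot i)) {x : B → ℝ} (hx : x ≤ 0) :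
    φ x ≤ 0 := by
  rw [← Finset.univ_sum_single x, map_sum]
  refine Finset.sum_nonpos fun b _ => ?_
  rw [show Pi.single b (x b) = x b • simpleRoot b by simp [simpleRoot, ← Pi.single_smul],
    map_smul, smul_eq_mul]
  exact mul_nonpos_of_nonpos_of_nonneg (hx b) (hφ b)

lemma apply_simpleReflection {i : B} (h : φ (simpleRoot i) = 0) (x : B → ℝ) :
    φ (M.simpleReflection i x) = φ x := by
  simp [simpleReflection_apply, h]

lemma apply_geomRep_of_mem_closure {u : W}
    (hu : u ∈ Subgroup.closure (cs.simple '' {i | φ (simpleRoot i) = 0})) (x : B → ℝ) :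
    φ (cs.geomRep u x) = φ x := by
  induction hu using Subgroup.closure_induction generalizing x with
  | mem _ h =>
    obtain ⟨i, hi, rfl⟩ := h
    rw [geomRep_simple, apply_simpleReflection φ hi]
  | one => simp
  | mul u v _ _ hu hv => rw [geomRep_mul_apply, hu, hv]
  | inv u _ hu => rw [← hu, ← geomRep_mul_apply, mul_inv_cancel, map_one]; rfl

lemma mem_closure_of_apply_geomRep (hφ : ∀ i, 0 ≤ φ (simpleRoot i)) {u : W}
    (hu : ∀ x, φ (cs.geomRep u x) = φ x) :
    u ∈ Subgroup.closure (cs.simple '' {i | φ (simpleRoot i) = 0}) := by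
  induction u using cs.rightDescent_induction with
  | one => exact one_mem _
  | mul_simple u i hi ih =>
    have hi₀ : φ (simpleRoot i) = 0 := le_antisymm (hu (simpleRoot i) ▸
      apply_nonpos_of_nonpos φ hφ (cs.geomRep_simpleRoot_nonpos hi)) (hφ i)
    have hui := ih fun x => by
      rw [geomRep_mul_apply, geomRep_simple, hu, apply_simpleReflection φ hi₀]
    simpa using mul_mem hui (Subgroup.subset_closure ⟨i, hi₀, rfl⟩)

lemma finite_closure_of_finite_posRoots_nonpos (hφ : ∀ i, 0 ≤ φ (simpleRoot i))
    (hfin : {γ ∈ cs.posRoots | φ γ ≤ 0}.Finite) :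
    (Subgroup.closure (cs.simple '' {i | φ (simpleRoot i) = 0}) : Set W).Finite := by
  refine (cs.finite_setOf_length_le {γ ∈ cs.posRoots | φ γ ≤ 0}.ncard).subset fun u hu => ?_
  rw [Set.mem_ofPred_eq, ← ncard_inversionRoots]
  refine Set.ncard_le_ncard (fun γ ⟨hγ, huγ⟩ => ⟨hγ, ?_⟩) hfin
  rw [← apply_geomRep_of_mem_closure cs φ hu]
  exact apply_nonpos_of_nonpos φ hφ huγ

lemma exists_apply_geomRep_simpleRoot_nonneg
    (hfin : ∀ w, {γ ∈ cs.posRoots | φ (cs.geomRep w γ) < 0}.Finite) :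
    ∃ w, ∀ i, 0 ≤ φ (cs.geomRep w (simpleRoot i)) := by
  set S := fun w => {γ ∈ cs.posRoots | φ (cs.geomRep w γ) < 0}
  have : Nonempty W := ⟨1⟩
  set w := Function.argmin fun w => (S w).ncard
  refine ⟨w, fun i => le_of_not_gt fun hi => ?_⟩
  have hsub : S (w * cs.simple i) ⊆ M.simpleReflection i '' (S w \ {simpleRoot i}) := by
    rintro γ ⟨hγ, hwγ⟩
    rw [geomRep_mul_apply, geomRep_simple] at hwγ
    have hne : γ ≠ simpleRoot i := by
      rintro rfl
      rw [simpleReflection_simpleRoot, map_neg, map_neg] at hwγ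
      linarith
    refine ⟨_, ⟨⟨simpleReflection_mem_posRoots hγ hne, hwγ⟩, fun h => ?_⟩,
      simpleReflection_simpleReflection _ i γ⟩
    apply simpleReflection_simpleRoot_notMem_posRoots (cs := cs) i
    rwa [← Set.mem_singleton_iff.mp h, simpleReflection_simpleReflection]
  have h₁ := Set.ncard_le_ncard hsub (((hfin w).sdiff).image _)
  rw [Set.ncard_image_of_injective _ (M.simpleReflection i).injective] at h₁
  have h₂ := Set.ncard_sdiff_singleton_lt_of_mem
    (show simpleRoot i ∈ S w from ⟨simpleRoot_mem_posRoots i, hi⟩) (hfin w)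
  have h₃ : (S w).ncard ≤ (S (w * cs.simple i)).ncard :=
    Function.argmin_le (fun w => (S w).ncard) _
  omega

end Functional

noncomputable def averagedFunctional (G : Subgroup W) [Fintype G] : Module.Dual ℝ (B → ℝ) :=
  ∑ g : G, (cs.geomRep g).dualMap (∑ b, LinearMap.proj b)

variable (G : Subgroup W) [Fintype G]

lemma averagedFunctional_apply (x : B → ℝ) :
    cs.averagedFunctional G x = ∑ g : G, ∑ b, cs.geomRep g x b := by
  simp [averagedFunctional]

lemma averagedFunctional_geomRep {g : W} (hg : g ∈ G) (x : B → ℝ) :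
    cs.averagedFunctional G (cs.geomRep g x) = cs.averagedFunctional G x := by
  simp only [averagedFunctional_apply, ← geomRep_mul_apply]
  exact Fintype.sum_equiv (Equiv.mulRight ⟨g, hg⟩) _ _ fun _ => by simp

lemma finite_posRoots_averagedFunctional_nonpos (w : W) :
    {γ ∈ cs.posRoots | cs.averagedFunctional G (cs.geomRep w γ) ≤ 0}.Finite := by
  refine (Set.finite_iUnion fun g : G => cs.finite_inversionRoots (g * w)).subset ?_
  rintro γ ⟨hγ, hY⟩
  by_contra hnot
  simp only [Set.mem_iUnion, not_exists] at hnot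
  refine hY.not_gt ?_
  rw [averagedFunctional_apply]
  refine Finset.sum_pos (fun g _ => ?_) Finset.univ_nonempty
  have hroot := geomRep_mem_roots (g * w) hγ.1
  rw [← geomRep_mul_apply]
  refine Fintype.sum_pos (lt_of_le_of_ne ?_ (ne_zero_of_mem_roots hroot).symm)
  exact (nonneg_or_nonpos_of_mem_roots hroot).resolve_right fun h => hnot g ⟨hγ, h⟩

end CoxeterSystem

/-- In a Coxeter system with finitely many generators, every finite subgroup is conjugate to a
subgroup of a finite standard parabolic subgroup. -/
theorem finite_subgroup_conjugate_into_finite_parabolic {B W : Type*} [Group W] [Finite B]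
    (M : CoxeterMatrix B) (cs : CoxeterSystem M W)
    (G : Subgroup W) (hG : (G : Set W).Finite) :
    ∃ (w : W) (T : Set B),
      (Subgroup.closure (cs.simple '' T) : Set W).Finite ∧
      ∀ g ∈ G, w * g * w⁻¹ ∈ Subgroup.closure (cs.simple '' T) := by
  classical
  have : Fintype B := Fintype.ofFinite B
  have : Finite G := hG
  have : Fintype G := Fintype.ofFinite G
  have hfin := cs.finite_posRoots_averagedFunctional_nonpos G
  obtain ⟨w, hw⟩ := cs.exists_apply_geomRep_simpleRoot_nonneg (cs.averagedFunctional G)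
    fun w => (hfin w).subset fun γ hγ => ⟨hγ.1, hγ.2.le⟩
  set φ := (cs.geomRep w).dualMap (cs.averagedFunctional G)
  refine ⟨w⁻¹, {i | φ (CoxeterMatrix.simpleRoot i) = 0},
    cs.finite_closure_of_finite_posRoots_nonpos φ hw (hfin w), fun g hg => ?_⟩
  rw [inv_inv]
  refine cs.mem_closure_of_apply_geomRep φ hw fun x => ?_
  simp only [φ, LinearEquiv.dualMap_apply]
  rw [← cs.geomRep_mul_apply, show w * (w⁻¹ * g * w) = g * w by group, cs.geomRep_mul_apply,
    cs.averagedFunctional_geomRep G hg]
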